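/- Let 0 < a < 1, l ∈ ℝ, ε > 0, and let ψ : (l, l+ε] → ℝ be twice continuously differentiable such that the limit lim_{x → l⁺} ψ''(x)·(x−l)^{1+a} exists and is nonzero. Then for every b with 1−a < b ≤ 1, the function ψ is not b-Hölder on (l, l+ε]. -/

import Mathlib

/-!
Assume `L > 0` (otherwise pass to `-ψ`). Near `l` we then have `ψ''(x) ≥ K (x-l)^{-(1+a)}` with
`K = L/2`, and integrating twice down from a fixed point `d` gives, for `l < x ≤ y ≤ d`,
`ψ(x) - ψ(y) ≥ C (x - y) + K/(a(1-a)) ((y-l)^{1-a} - (x-l)^{1-a})`.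
At `x = l + t`, `y = l + 2t` this is `≥ κ t^{1-a} - |C| t` with `κ > 0`, which for small `t`
exceeds the Hölder bound `M t^b` because `1 - a < b` and `1 - a < 1`.
-/

open Set Filter Topology

lemma monotoneOn_sub_of_hasDerivWithinAt_le {D : Set ℝ} (hD : Convex ℝ D) {f g f' g' : ℝ → ℝ}
    (hf : ∀ x ∈ D, HasDerivWithinAt f (f' x) D x) (hg : ∀ x ∈ D, HasDerivWithinAt g (g' x) D x)
    (hle : ∀ x ∈ interior D, g' x ≤ f' x) : MonotoneOn (fun x => f x - g x) D :=
  monotoneOn_of_hasDerivWithinAt_nonneg hD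
    (fun x hx => ((hf x hx).sub (hg x hx)).continuousWithinAt)
    (fun x hx => ((hf x (interior_subset hx)).sub (hg x (interior_subset hx))).mono
      interior_subset)
    (fun x hx => sub_nonneg.mpr (hle x hx))

lemma hasDerivAt_sub_rpow_const {l x : ℝ} (p : ℝ) (hx : l < x) :
    HasDerivAt (fun y => (y - l) ^ p) (p * (x - l) ^ (p - 1)) x := by
  simpa using ((hasDerivAt_id x).sub_const l).rpow_const (p := p) (Or.inl (sub_ne_zero.mpr hx.ne'))

lemma eventually_le_of_tendsto_mul_rpow {f : ℝ → ℝ} {l r L : ℝ} (hL : 0 < L)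
    (h : Tendsto (fun x => f x * (x - l) ^ r) (𝓝[>] l) (𝓝 L)) :
    ∀ᶠ x in 𝓝[>] l, L / 2 * (x - l) ^ (-r) ≤ f x := by
  filter_upwards [h.eventually (eventually_gt_nhds (half_lt_self hL)), self_mem_nhdsWithin]
    with x hx (hlx : l < x)
  have hpos : 0 < (x - l) ^ r := Real.rpow_pos_of_pos (sub_pos.mpr hlx) r
  rw [Real.rpow_neg (sub_pos.mpr hlx).le, ← div_eq_mul_inv]
  exact ((div_lt_iff₀ hpos).mpr hx).le

lemma exists_le_sub_of_le_deriv2 {ψ ψ' ψ'' : ℝ → ℝ} {l d a K : ℝ} (ha0 : 0 < a) (ha1 : a < 1)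
    (hld : l < d)
    (hψ : ∀ x ∈ Ioc l d, HasDerivWithinAt ψ (ψ' x) (Ioc l d) x)
    (hψ' : ∀ x ∈ Ioc l d, HasDerivWithinAt ψ' (ψ'' x) (Ioc l d) x)
    (hψ'' : ∀ x ∈ Ioc l d, K * (x - l) ^ (-(1 + a)) ≤ ψ'' x) :
    ∃ C, ∀ x ∈ Ioc l d, ∀ y ∈ Ioc l d, x ≤ y →
      C * (x - y) + K / (a * (1 - a)) * ((y - l) ^ (1 - a) - (x - l) ^ (1 - a)) ≤ ψ x - ψ y := by
  have hpow (p : ℝ) (x : ℝ) (hx : x ∈ Ioc l d) :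
      HasDerivWithinAt (fun y => (y - l) ^ p) (p * (x - l) ^ (p - 1)) (Ioc l d) x :=
    (hasDerivAt_sub_rpow_const p hx.1).hasDerivWithinAt
  set C := ψ' d + K / a * (d - l) ^ (-a)
  have hψ'_le : ∀ x ∈ Ioc l d, ψ' x ≤ C - K / a * (x - l) ^ (-a) := by
    have hmono := monotoneOn_sub_of_hasDerivWithinAt_le (convex_Ioc l d) hψ'
      (fun x hx => (hpow (-a) x hx).const_mul (-(K / a))) fun x hx => by
        rw [interior_Ioc] at hx
        have h := hψ'' x (Ioo_subset_Ioc_self hx)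
        rw [show -(1 + a) = -a - 1 by ring] at h
        field_simp
        linarith
    intro x hx
    have h := hmono hx (right_mem_Ioc.mpr hld) hx.2
    simp only at h
    linarith
  refine ⟨C, fun x hx y hy hxy => ?_⟩
  have hmono := monotoneOn_sub_of_hasDerivWithinAt_le (convex_Ioc l d)
    (fun x hx => ((hasDerivAt_mul_const C).hasDerivWithinAt.sub
      ((hpow (1 - a) x hx).const_mul (K / (a * (1 - a))))))
    hψ fun x hx => by
      rw [interior_Ioc] at hx
      have h := hψ'_le x (Ioo_subset_Ioc_self hx)
      rw [show 1 - a - 1 = -a by ring]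
      have : K / (a * (1 - a)) * ((1 - a) * (x - l) ^ (-a)) = K / a * (x - l) ^ (-a) := by
        field_simp [(sub_pos.mpr ha1).ne']
      linarith
  have h := hmono hx hy hxy
  simp only [Pi.sub_apply] at h
  linarith

lemma eventually_add_lt_mul_rpow {p b κ : ℝ} (M A : ℝ) (hκ : 0 < κ) (hpb : p < b) (hp1 : p < 1) :
    ∀ᶠ t in 𝓝[>] (0 : ℝ), M * t ^ b + A * t < κ * t ^ p := by
  have hzero {q : ℝ} (hq : 0 < q) : Tendsto (fun t : ℝ => t ^ q) (𝓝[>] 0) (𝓝 0) := by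
    simpa [Real.zero_rpow hq.ne'] using
      (Real.continuousAt_rpow_const 0 q (Or.inr hq.le)).tendsto.mono_left nhdsWithin_le_nhds
  have hlim : Tendsto (fun t : ℝ => M * t ^ (b - p) + A * t ^ (1 - p)) (𝓝[>] 0) (𝓝 0) := by
    simpa using ((hzero (sub_pos.mpr hpb)).const_mul M).add ((hzero (sub_pos.mpr hp1)).const_mul A)
  filter_upwards [hlim.eventually (eventually_lt_nhds hκ), self_mem_nhdsWithin]
    with t ht (ht0 : 0 < t)
  have hsplit (q : ℝ) : t ^ q = t ^ (q - p) * t ^ p := by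
    rw [← Real.rpow_add ht0, sub_add_cancel]
  calc M * t ^ b + A * t = (M * t ^ (b - p) + A * t ^ (1 - p)) * t ^ p := by
        rw [add_mul, mul_assoc, mul_assoc, ← hsplit b, ← hsplit 1, Real.rpow_one]
    _ < κ * t ^ p := mul_lt_mul_of_pos_right ht (Real.rpow_pos_of_pos ht0 p)

lemma not_exists_holder_of_tendsto_mul_rpow_pos {ψ ψ' ψ'' : ℝ → ℝ} {a l r b L : ℝ}
    (ha0 : 0 < a) (ha1 : a < 1) (hlr : l < r) (hb : 1 - a < b) (hL : 0 < L)
    (hψ : ∀ x ∈ Ioc l r, HasDerivWithinAt ψ (ψ' x) (Ioc l r) x)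
    (hψ' : ∀ x ∈ Ioc l r, HasDerivWithinAt ψ' (ψ'' x) (Ioc l r) x)
    (hlim : Tendsto (fun x => ψ'' x * (x - l) ^ (1 + a)) (𝓝[>] l) (𝓝 L)) :
    ¬ ∃ M : ℝ, ∀ x ∈ Ioc l r, ∀ y ∈ Ioc l r, |ψ x - ψ y| ≤ M * |x - y| ^ b := by
  rintro ⟨M, hhol⟩
  obtain ⟨d, hld, hsub⟩ := mem_nhdsGT_iff_exists_Ioc_subset.mp
    ((eventually_le_of_tendsto_mul_rpow hL hlim).and (Ioc_mem_nhdsGT hlr))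
  have hdr : Ioc l d ⊆ Ioc l r := fun x hx => (hsub hx).2
  obtain ⟨C, hC⟩ := exists_le_sub_of_le_deriv2 ha0 ha1 hld
    (fun x hx => (hψ x (hdr hx)).mono hdr) (fun x hx => (hψ' x (hdr hx)).mono hdr)
    (fun x hx => (hsub hx).1)
  set κ := L / 2 / (a * (1 - a)) * (2 ^ (1 - a) - 1)
  have hκ : 0 < κ := by
    have : (1 : ℝ) < 2 ^ (1 - a) := Real.one_lt_rpow one_lt_two (by linarith)
    have : 0 < 1 - a := by linarith
    positivity
  have hsmall : ∀ᶠ t in 𝓝[>] (0 : ℝ), κ * t ^ (1 - a) ≤ M * t ^ b + |C| * t := by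
    filter_upwards [Ioc_mem_nhdsGT (half_pos (sub_pos.mpr hld))] with t ⟨ht0, htd⟩
    have hx : l + t ∈ Ioc l d := ⟨by linarith, by linarith⟩
    have hy : l + 2 * t ∈ Ioc l d := ⟨by linarith, by linarith⟩
    have hlow := hC _ hx _ hy (by linarith)
    have hup := hhol _ (hdr hx) _ (hdr hy)
    rw [show l + t - (l + 2 * t) = -t by ring] at hlow hup
    rw [abs_neg, abs_of_pos ht0] at hup
    rw [add_sub_cancel_left, add_sub_cancel_left,
      Real.mul_rpow zero_le_two ht0.le] at hlow
    have hCt : -(|C| * t) ≤ C * -t := by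
      rw [mul_neg, neg_le_neg_iff]; exact mul_le_mul_of_nonneg_right (le_abs_self C) ht0.le
    have hκt : κ * t ^ (1 - a) =
        L / 2 / (a * (1 - a)) * (2 ^ (1 - a) * t ^ (1 - a) - t ^ (1 - a)) := by ring
    linarith [le_abs_self (ψ (l + t) - ψ (l + 2 * t))]
  obtain ⟨t, hle, hlt⟩ := (hsmall.and (eventually_add_lt_mul_rpow M |C| hκ hb (by linarith))).exists
  exact hle.not_gt hlt

theorem stmt_5_general (a l ε : ℝ) (ha1 : a < 1) (hε : 0 < ε)
    (ψ ψ' ψ'' : ℝ → ℝ)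
    (hd1 : ∀ x ∈ Set.Ioc l (l + ε), HasDerivWithinAt ψ (ψ' x) (Set.Ioc l (l + ε)) x)
    (hd2 : ∀ x ∈ Set.Ioc l (l + ε), HasDerivWithinAt ψ' (ψ'' x) (Set.Ioc l (l + ε)) x)
    (L : ℝ) (hL : L ≠ 0)
    (hlim : Filter.Tendsto (fun x => ψ'' x * (x - l) ^ (1 + a))
      (nhdsWithin l (Set.Ioi l)) (nhds L)) :
    ∀ b : ℝ, 1 - a < b → b ≤ 1 →
      ¬ ∃ M : ℝ, 0 ≤ M ∧ ∀ x ∈ Set.Ioc l (l + ε), ∀ y ∈ Set.Ioc l (l + ε),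
        |ψ x - ψ y| ≤ M * |x - y| ^ b := by
  rintro b hb hb_le ⟨M, -, hhol⟩
  have ha0 : 0 < a := by linarith
  have hlr : l < l + ε := by linarith
  rcases hL.lt_or_gt with hneg | hpos
  · refine not_exists_holder_of_tendsto_mul_rpow_pos ha0 ha1 hlr hb (neg_pos.mpr hneg)
      (fun x hx => (hd1 x hx).neg) (fun x hx => (hd2 x hx).neg) ?_ ⟨M, fun x hx y hy => ?_⟩
    · simpa only [neg_mul] using hlim.neg
    · rw [Pi.neg_apply, Pi.neg_apply, neg_sub_neg, abs_sub_comm]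
      exact hhol x hx y hy
  · exact not_exists_holder_of_tendsto_mul_rpow_pos ha0 ha1 hlr hb hpos hd1 hd2 hlim ⟨M, hhol⟩

/-- Invariance argument for the functionals `C^{a,±}_{α,n}` in the proof of
Theorem 5.8 of the paper (case `0 < a < 1`): if `ψ''(x)(x-l)^{1+a}` has a nonzero
limit as `x → l⁺`, then `ψ` is not `b`-Hölder on `(l, l+ε]` for any `b > 1-a`. -/
theorem stmt_5 (a l ε : ℝ) (ha0 : 0 < a) (ha1 : a < 1) (hε : 0 < ε)
    (ψ ψ' ψ'' : ℝ → ℝ)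
    (hd1 : ∀ x ∈ Set.Ioc l (l + ε), HasDerivWithinAt ψ (ψ' x) (Set.Ioc l (l + ε)) x)
    (hd2 : ∀ x ∈ Set.Ioc l (l + ε), HasDerivWithinAt ψ' (ψ'' x) (Set.Ioc l (l + ε)) x)
    (hcont : ContinuousOn ψ'' (Set.Ioc l (l + ε)))
    (L : ℝ) (hL : L ≠ 0)
    (hlim : Filter.Tendsto (fun x => ψ'' x * (x - l) ^ (1 + a))
      (nhdsWithin l (Set.Ioi l)) (nhds L)) :
    ∀ b : ℝ, 1 - a < b → b ≤ 1 →
      ¬ ∃ M : ℝ, 0 ≤ M ∧ ∀ x ∈ Set.Ioc l (l + ε), ∀ y ∈ Set.Ioc l (l + ε),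
        |ψ x - ψ y| ≤ M * |x - y| ^ b :=
  stmt_5_general a l ε ha1 hε ψ ψ' ψ'' hd1 hd2 L hL hlim
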